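/- Let A be a commutative ring, let X and Y be derivations of A, and let P, Q ∈ A satisfy X(Y(f)) − Y(X(f)) = P·X(f) + Q·Y(f) for all f ∈ A. Let D₀, E₀, G₀ ∈ A and suppose θ ∈ A satisfies Y(X(θ)) + D₀·X(θ) + E₀·Y(θ) + G₀·θ = 0. Assume K₀ := Y(E₀) + E₀·D₀ − G₀ is a unit of A with inverse K₀⁻¹. Then ξ := X(θ) + E₀·θ satisfies Y(X(ξ)) + D₁·X(ξ) + E₁·Y(ξ) + G₁·ξ = 0, where D₁ = D₀ + P, E₁ = E₀ − K₀⁻¹·X(K₀) + Q, and G₁ = G₀ − Y(E₀) − D₀·K₀⁻¹·X(K₀) + X(D₀). -/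

import Mathlib

/-!
Writing `ξ = X θ + E₀ θ`, the equation for `θ` factors as `(Y + D₀) ξ = K₀ θ`. Applying `X` to
this and commuting `X` past `Y` gives an equation of the same shape for `ξ` whose only stray
term is `X(K₀) θ`; since `K₀` is a unit, `θ = K₀⁻¹ (Y + D₀) ξ`, and that term is absorbed into
the coefficients.
-/

namespace Derivation

variable {R A : Type*} [CommSemiring R] [CommRing A] [Algebra R A]

def hyperbolicOp (X Y : Derivation R A A) (D E G θ : A) : A :=
  Y (X θ) + D * X θ + E * Y θ + G * θ

theorem hyperbolicOp_eq_sub (X Y : Derivation R A A) (D E G θ : A) :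
    hyperbolicOp X Y D E G θ
      = Y (X θ + E * θ) + D * (X θ + E * θ) - (Y E + E * D - G) * θ := by
  simp only [hyperbolicOp, map_add, leibniz, smul_eq_mul]
  ring

theorem hyperbolicOp_of_factorization (X Y : Derivation R A A) (P Q : A)
    (hcomm : ∀ f : A, X (Y f) - Y (X f) = P * X f + Q * Y f) {D E K θ : A}
    (hK : Y (X θ + E * θ) + D * (X θ + E * θ) = K * θ) :
    hyperbolicOp X Y (D + P) (E + Q) (X D + E * D - K) (X θ + E * θ) = X K * θ := by
  set ξ := X θ + E * θ with hξ
  have hXK : X (Y ξ) + X D * ξ + D * X ξ = X K * θ + K * X θ := by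
    have h := congrArg X hK
    simp only [map_add, leibniz, smul_eq_mul] at h
    linear_combination h
  simp only [hyperbolicOp]
  linear_combination hXK - hcomm ξ + E * hK - K * hξ

end Derivation

open Derivation in
/-- The X-Laplace transformation: if `θ` solves the reordered linearized hyperbolic equation
with coefficients `D₀, E₀, G₀` and `K₀ = Y E₀ + E₀ D₀ - G₀` is a unit, then
`ξ = X θ + E₀ θ` solves an equation of the same form with the transformed coefficients. -/
theorem laplace_transform_X
    {A : Type*} [CommRing A] (X Y : Derivation ℤ A A) (P Q : A)
    (hcomm : ∀ f : A, X (Y f) - Y (X f) = P * X f + Q * Y f)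
    (D₀ E₀ G₀ θ : A)
    (hθ : Y (X θ) + D₀ * X θ + E₀ * Y θ + G₀ * θ = 0)
    (K₀ K₀inv : A) (hK₀ : K₀ = Y E₀ + E₀ * D₀ - G₀)
    (hinv : K₀ * K₀inv = 1) :
    Y (X (X θ + E₀ * θ))
      + (D₀ + P) * X (X θ + E₀ * θ)
      + (E₀ - K₀inv * X K₀ + Q) * Y (X θ + E₀ * θ)
      + (G₀ - Y E₀ - D₀ * (K₀inv * X K₀) + X D₀) * (X θ + E₀ * θ) = 0 := by
  set ξ := X θ + E₀ * θ
  have hfac : Y ξ + D₀ * ξ = K₀ * θ := by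
    have h := hyperbolicOp_eq_sub X Y D₀ E₀ G₀ θ
    rw [← hK₀] at h
    exact sub_eq_zero.mp (h ▸ hθ)
  have hθ_eq : θ = K₀inv * (Y ξ + D₀ * ξ) := by
    rw [hfac, ← mul_assoc, mul_comm K₀inv, hinv, one_mul]
  have hstep := hyperbolicOp_of_factorization X Y P Q hcomm hfac
  simp only [hyperbolicOp] at hstep
  linear_combination hstep + X K₀ * hθ_eq + ξ * hK₀
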